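/- arXiv:2501.04134 — 5 statements merged into one kernel-verified Lean document; each statement's English description precedes it below -/
import Mathlib

section
/- Let T ∈ ℕ, (c_t)_{t=0}^{T-1} strictly positive, (h_t)_{t=0}^{T-1} nonnegative, (σ_t)_{t=0}^{T-1} strictly positive, φ_t(δ) = √(c_t δ² + h_t), u_0 = D > 0, u_T = 0, and E(u) = Σ_{t=1}^T (φ_{t-1}(u_{t-1}) - u_t)²/σ_{t-1}². Define u*_t recursively by u*_t = (Σ_{k=t}^{T-1} σ_k² ∏_{l=k+1}^{T-1} c_l) / (Σ_{j=t-1}^{T-1} σ_j² ∏_{l=j+1}^{T-1} c_l) · φ_{t-1}(u*_{t-1}) for t = 1,…,T-1. Then E(u*) = (D² ∏_{k=0}^{T-1} c_k) / (Σ_{j=0}^{T-1} σ_j² ∏_{l=j+1}^{T-1} c_l) + Σ_{t=0}^{T-1} h_t ∏_{k=t+1}^{T-1} c_k / (Σ_{j=t}^{T-1} σ_j² ∏_{l=j+1}^{T-1} c_l). -/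
open Finset

/-- Closed-form value of the shifts-optimization objective at the recursively
defined stationary point `u*`. Here `A t = ∑_{k=t}^{T-1} σ_k² ∏_{l=k+1}^{T-1} c_l`,
`u*_t = (A t / A (t-1)) · φ_{t-1}(u*_{t-1})` for `t = 1, …, T-1`, `u*_0 = D`, `u*_T = 0`. -/
theorem shifts_optimization_value_at_ustar
    (T : ℕ) (hT : 1 ≤ T) (c h σ : ℕ → ℝ)
    (hc : ∀ t < T, 0 < c t) (hh : ∀ t < T, 0 ≤ h t) (hσ : ∀ t < T, 0 < σ t)
    (D : ℝ) (hD : 0 < D)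
    (φ : ℕ → ℝ → ℝ) (hφ : ∀ t δ, φ t δ = Real.sqrt (c t * δ ^ 2 + h t))
    (A : ℕ → ℝ)
    (hA : ∀ t, A t = ∑ k ∈ Finset.Ico t T, (σ k) ^ 2 * ∏ l ∈ Finset.Ico (k + 1) T, c l)
    (u : ℕ → ℝ) (hu0 : u 0 = D) (huT : u T = 0)
    (hurec : ∀ t, 1 ≤ t → t ≤ T - 1 → u t = (A t / A (t - 1)) * φ (t - 1) (u (t - 1))) :
    ∑ t ∈ Finset.range T, (φ t (u t) - u (t + 1)) ^ 2 / (σ t) ^ 2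
      = (D ^ 2 * ∏ k ∈ Finset.range T, c k) / A 0
        + ∑ t ∈ Finset.range T, (h t * ∏ k ∈ Finset.Ico (t + 1) T, c k) / A t := by
  have hprod : ∀ a, 0 < ∏ l ∈ Finset.Ico a T, c l := by
    intro a
    exact Finset.prod_pos fun l hl => hc l (Finset.mem_Ico.mp hl).2
  have hApos : ∀ t < T, 0 < A t := by
    intro t ht
    rw [hA]
    refine Finset.sum_pos (fun k hk => mul_pos (pow_pos (hσ k (Finset.mem_Ico.mp hk).2) 2) (hprod _)) ⟨t, Finset.mem_Ico.mpr ⟨le_refl t, ht⟩⟩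
  have hAT : A T = 0 := by rw [hA]; simp
  have hAstep : ∀ t < T, A t = σ t ^ 2 * (∏ l ∈ Finset.Ico (t+1) T, c l) + A (t+1) := by
    intro t ht
    rw [hA, hA, Finset.sum_eq_sum_Ico_succ_bot ht]
  have hφsq : ∀ t < T, ∀ δ, (φ t δ) ^ 2 = c t * δ ^ 2 + h t := by
    intro t ht δ
    rw [hφ, Real.sq_sqrt (add_nonneg (mul_nonneg (hc t ht).le (sq_nonneg δ)) (hh t ht))]
  have hu' : ∀ t < T, u (t+1) = (A (t+1) / A t) * φ t (u t) := by
    intro t ht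
    by_cases hlt : t + 1 < T
    · have := hurec (t+1) (by omega) (by omega)
      simpa using this
    · have hEq : t + 1 = T := by omega
      rw [hEq, huT, hAT]; simp
  -- the "value function" V
  set V : ℕ → ℝ := fun t => D ^ 2 * (∏ k ∈ Finset.range (t+1), c k) / A 0 ^ 2
      + ∑ s ∈ Finset.range (t+1), h s * (∏ k ∈ Finset.Ico (s+1) (t+1), c k) / A s ^ 2 with hV
  have Vstep : ∀ t, V (t+1) = c (t+1) * V t + h (t+1) / A (t+1) ^ 2 := by
    intro t
    rw [hV]
    simp only
    rw [Finset.sum_range_succ, Finset.prod_range_succ]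
    have hsum : ∑ s ∈ Finset.range (t+1), h s * (∏ k ∈ Finset.Ico (s+1) (t+1+1), c k) / A s ^ 2
        = c (t+1) * ∑ s ∈ Finset.range (t+1), h s * (∏ k ∈ Finset.Ico (s+1) (t+1), c k) / A s ^ 2 := by
      rw [Finset.mul_sum]
      refine Finset.sum_congr rfl fun s hs => ?_
      rw [Finset.prod_Ico_succ_top (Nat.succ_le_succ (Nat.lt_succ_iff.mp (Finset.mem_range.mp hs)))]
      ring
    rw [hsum]
    simp [Finset.Ico_self]
    ring
  have key : ∀ t < T, (φ t (u t)) ^ 2 = A t ^ 2 * V t := by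
    intro t
    induction t with
    | zero =>
      intro ht
      rw [hφsq 0 ht, hu0, hV]
      simp only
      have hA0 : A 0 ≠ 0 := ne_of_gt (hApos 0 ht)
      simp [Finset.Ico_self]
      field_simp
    | succ t ih =>
      intro ht
      have ht' : t < T := by omega
      rw [hφsq (t+1) ht, hu' t ht', mul_pow, div_pow, ih ht', Vstep]
      have hAne : A t ≠ 0 := ne_of_gt (hApos t ht')
      have hAne' : A (t+1) ≠ 0 := ne_of_gt (hApos (t+1) ht)
      field_simp
  have termEq : ∀ t < T, (φ t (u t) - u (t + 1)) ^ 2 / σ t ^ 2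
      = σ t ^ 2 * (∏ l ∈ Finset.Ico (t+1) T, c l) ^ 2 * V t := by
    intro t ht
    have hAne : A t ≠ 0 := ne_of_gt (hApos t ht)
    have hσne : σ t ≠ 0 := ne_of_gt (hσ t ht)
    have h1 : φ t (u t) - u (t+1) = ((A t - A (t+1)) / A t) * φ t (u t) := by
      rw [hu' t ht]; field_simp
    have hdiff : A t - A (t+1) = σ t ^ 2 * ∏ l ∈ Finset.Ico (t+1) T, c l := by
      rw [hAstep t ht]; ring
    rw [h1, mul_pow, div_pow, hdiff, key t ht]
    field_simp
  rw [Finset.sum_congr rfl fun t ht => termEq t (Finset.mem_range.mp ht)]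
  have PQ : ∀ s t : ℕ, s ≤ t → t < T →
      (∏ k ∈ Finset.Ico (s+1) (t+1), c k) * (∏ l ∈ Finset.Ico (t+1) T, c l)
        = ∏ k ∈ Finset.Ico (s+1) T, c k :=
    fun s t hst htT => Finset.prod_Ico_consecutive c (by omega) (by omega)
  have split : ∀ t < T, σ t ^ 2 * (∏ l ∈ Finset.Ico (t+1) T, c l) ^ 2 * V t
      = (σ t ^ 2 * ∏ l ∈ Finset.Ico (t+1) T, c l) * ((∏ k ∈ Finset.range T, c k) * (D ^ 2 / A 0 ^ 2))
        + ∑ s ∈ Finset.range (t+1), (σ t ^ 2 * ∏ l ∈ Finset.Ico (t+1) T, c l) * ((∏ k ∈ Finset.Ico (s+1) T, c k) * (h s / A s ^ 2)) := by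
    intro t ht
    rw [hV]
    simp only
    rw [mul_add]
    congr 1
    · have hpr : (∏ k ∈ Finset.range (t+1), c k) * (∏ l ∈ Finset.Ico (t+1) T, c l)
          = ∏ k ∈ Finset.range T, c k := Finset.prod_range_mul_prod_Ico c (by omega)
      rw [← hpr]; ring
    · rw [Finset.mul_sum]
      refine Finset.sum_congr rfl fun s hs => ?_
      rw [← PQ s t (Nat.lt_succ_iff.mp (Finset.mem_range.mp hs)) ht]
      ring
  rw [Finset.sum_congr rfl fun t ht => split t (Finset.mem_range.mp ht),
      Finset.sum_add_distrib]
  have part1 : ∑ t ∈ Finset.range T, (σ t ^ 2 * ∏ l ∈ Finset.Ico (t+1) T, c l) * ((∏ k ∈ Finset.range T, c k) * (D ^ 2 / A 0 ^ 2))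
      = (D ^ 2 * ∏ k ∈ Finset.range T, c k) / A 0 := by
    rw [← Finset.sum_mul, Finset.range_eq_Ico, ← hA 0]
    have hA0 : A 0 ≠ 0 := ne_of_gt (hApos 0 hT)
    field_simp
  have part2 : ∑ t ∈ Finset.range T, ∑ s ∈ Finset.range (t+1), (σ t ^ 2 * ∏ l ∈ Finset.Ico (t+1) T, c l) * ((∏ k ∈ Finset.Ico (s+1) T, c k) * (h s / A s ^ 2))
      = ∑ s ∈ Finset.range T, (h s * ∏ k ∈ Finset.Ico (s+1) T, c k) / A s := by
    simp only [Finset.range_eq_Ico]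
    rw [← Finset.sum_Ico_Ico_comm 0 T (fun s t => (σ t ^ 2 * ∏ l ∈ Finset.Ico (t+1) T, c l) * ((∏ k ∈ Finset.Ico (s+1) T, c k) * (h s / A s ^ 2)))]
    refine Finset.sum_congr rfl fun s hs => ?_
    have hsT : s < T := (Finset.mem_Ico.mp hs).2
    have hAs : A s ≠ 0 := ne_of_gt (hApos s hsT)
    have inner : ∑ t ∈ Finset.Ico s T, (σ t ^ 2 * ∏ l ∈ Finset.Ico (t+1) T, c l) * ((∏ k ∈ Finset.Ico (s+1) T, c k) * (h s / A s ^ 2))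
        = A s * ((∏ k ∈ Finset.Ico (s+1) T, c k) * (h s / A s ^ 2)) := by
      rw [← Finset.sum_mul, ← hA s]
    rw [inner]
    field_simp
  rw [part1, part2]
end

section
/- With the setup of the shifts-optimization problem (φ_t(δ) = √(c_t δ² + h_t), c_t > 0, h_t ≥ 0, σ_t > 0, u_0 = D > 0, u_T = 0), the point u* defined by u*_t = (Σ_{k=t}^{T-1} σ_k² ∏_{l=k+1}^{T-1} c_l)/(Σ_{j=t-1}^{T-1} σ_j² ∏_{l=j+1}^{T-1} c_l) · φ_{t-1}(u*_{t-1}) is the unique solution of the stationarity equations (c_t σ_{t-1}² + σ_t²) u_t - σ_{t-1}² φ_t'(u_t) u_{t+1} = σ_t² φ_{t-1}(u_{t-1}) for t = 1,…,T-1. -/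
open Finset

/-- The recursively defined point `u*` is the unique solution of the stationarity
equations `(c_t σ_{t-1}² + σ_t²) u_t - σ_{t-1}² φ_t'(u_t) u_{t+1} = σ_t² φ_{t-1}(u_{t-1})`
for `t = 1, …, T-1`, where `φ_t'(x) = c_t x / √(c_t x² + h_t)`. -/
theorem shifts_optimization_unique_stationary_point
    (T : ℕ) (hT : 1 ≤ T) (c h σ : ℕ → ℝ)
    (hc : ∀ t < T, 0 < c t) (hh : ∀ t < T, 0 ≤ h t) (hσ : ∀ t < T, 0 < σ t)
    (D : ℝ) (hD : 0 < D)
    (φ : ℕ → ℝ → ℝ) (hφ : ∀ t δ, φ t δ = Real.sqrt (c t * δ ^ 2 + h t))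
    (φ' : ℕ → ℝ → ℝ) (hφ' : ∀ t x, φ' t x = c t * x / Real.sqrt (c t * x ^ 2 + h t))
    (A : ℕ → ℝ)
    (hA : ∀ t, A t = ∑ k ∈ Finset.Ico t T, (σ k) ^ 2 * ∏ l ∈ Finset.Ico (k + 1) T, c l)
    (u : ℕ → ℝ) (hu0 : u 0 = D) (huT : u T = 0)
    (hurec : ∀ t, 1 ≤ t → t ≤ T - 1 → u t = (A t / A (t - 1)) * φ (t - 1) (u (t - 1))) :
    (∀ t, 1 ≤ t → t ≤ T - 1 →
        (c t * (σ (t - 1)) ^ 2 + (σ t) ^ 2) * u t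
            - (σ (t - 1)) ^ 2 * φ' t (u t) * u (t + 1)
          = (σ t) ^ 2 * φ (t - 1) (u (t - 1)))
    ∧ ∀ v : ℕ → ℝ, v 0 = D → v T = 0 →
        (∀ t, 1 ≤ t → t ≤ T - 1 →
          (c t * (σ (t - 1)) ^ 2 + (σ t) ^ 2) * v t
              - (σ (t - 1)) ^ 2 * φ' t (v t) * v (t + 1)
            = (σ t) ^ 2 * φ (t - 1) (v (t - 1))) →
        ∀ t, 1 ≤ t → t ≤ T - 1 → v t = u t := by
  have hAT : A T = 0 := by rw [hA]; simp
  have hApos : ∀ t, t < T → 0 < A t := by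
    intro t ht
    rw [hA]
    apply Finset.sum_pos
    · intro k hk
      exact mul_pos (pow_pos (hσ k (Finset.mem_Ico.mp hk).2) 2)
        (Finset.prod_pos fun l hl => hc l (Finset.mem_Ico.mp hl).2)
    · exact ⟨t, Finset.mem_Ico.mpr ⟨le_refl t, ht⟩⟩
  have hAstep : ∀ t, t < T →
      A t = σ t ^ 2 * ∏ l ∈ Finset.Ico (t + 1) T, c l + A (t + 1) := by
    intro t ht
    rw [hA t, hA (t + 1), Finset.sum_eq_sum_Ico_succ_bot ht]
  have key : ∀ t, 1 ≤ t → t ≤ T - 1 → ∀ v : ℕ → ℝ,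
      v (t + 1) = A (t + 1) / A t * φ t (v t) →
      (((c t * (σ (t - 1)) ^ 2 + (σ t) ^ 2) * v t
            - (σ (t - 1)) ^ 2 * φ' t (v t) * v (t + 1)
          = (σ t) ^ 2 * φ (t - 1) (v (t - 1)))
        ↔ v t = A t / A (t - 1) * φ (t - 1) (v (t - 1))) := by
    intro t h1 h2 v hv1
    have htT : t < T := by omega
    have ht1T : t - 1 < T := by omega
    have hP : 0 < ∏ l ∈ Finset.Ico (t + 1) T, c l :=
      Finset.prod_pos fun l hl => hc l (Finset.mem_Ico.mp hl).2
    set P := ∏ l ∈ Finset.Ico (t + 1) T, c l with hPdef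
    have hA1 : A (t - 1) = σ (t - 1) ^ 2 * (c t * P) + A t := by
      have h' := hAstep (t - 1) ht1T
      rw [show t - 1 + 1 = t by omega] at h'
      rw [h', Finset.prod_eq_prod_Ico_succ_bot htT]
    have hA2 : A t = σ t ^ 2 * P + A (t + 1) := hAstep t htT
    have hA0 : (0:ℝ) < A t := hApos t htT
    have hAm : (0:ℝ) < A (t - 1) := hApos (t - 1) ht1T
    have hct : 0 < c t := hc t htT
    have hht : 0 ≤ h t := hh t htT
    have hst : 0 < σ t := hσ t htT
    have hterm : φ' t (v t) * v (t + 1) = c t * (A (t + 1) / A t) * v t := by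
      rw [hφ', hv1, hφ]
      rcases eq_or_ne (v t) 0 with hz | hz
      · simp [hz]
      · have hvsq : 0 < v t ^ 2 := by positivity
        have hpos : 0 < c t * v t ^ 2 + h t := by nlinarith
        have hs : Real.sqrt (c t * v t ^ 2 + h t) ≠ 0 :=
          ne_of_gt (Real.sqrt_pos.mpr hpos)
        field_simp
    rw [mul_assoc ((σ (t - 1)) ^ 2), hterm]
    have hσ2 : (σ t : ℝ) ^ 2 ≠ 0 := by positivity
    constructor
    · intro H
      rw [div_mul_eq_mul_div, eq_div_iff (ne_of_gt hAm)]
      have H' : (c t * σ (t - 1) ^ 2 + σ t ^ 2) * v t * A t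
          - σ (t - 1) ^ 2 * (c t * A (t + 1) * v t)
          = σ t ^ 2 * φ (t - 1) (v (t - 1)) * A t := by
        field_simp at H
        linear_combination H
      apply mul_left_cancel₀ hσ2
      linear_combination H' + (σ t ^ 2 * v t) * hA1
        - (σ (t - 1) ^ 2 * c t * v t) * hA2
    · intro H
      rw [div_mul_eq_mul_div, eq_div_iff (ne_of_gt hAm)] at H
      field_simp
      linear_combination σ t ^ 2 * H - (σ t ^ 2 * v t) * hA1
        + (σ (t - 1) ^ 2 * c t * v t) * hA2
  constructor
  · intro t h1 h2
    have hu1 : u (t + 1) = A (t + 1) / A t * φ t (u t) := by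
      rcases eq_or_lt_of_le (show t + 1 ≤ T by omega) with hteq | htlt
      · rw [hteq, huT, hAT]; simp
      · have h' := hurec (t + 1) (by omega) (by omega)
        simpa using h'
    exact (key t h1 h2 u hu1).mpr (hurec t h1 h2)
  · intro v hv0 hvT hEv
    have Q : ∀ d t, t + d = T → 1 ≤ t →
        v t = A t / A (t - 1) * φ (t - 1) (v (t - 1)) := by
      intro d
      induction d with
      | zero =>
        intro t htd h1
        have ht : t = T := by omega
        rw [ht, hvT, hAT]
        simp
      | succ d ih =>
        intro t htd h1
        have hv1 : v (t + 1) = A (t + 1) / A t * φ t (v t) := by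
          have h' := ih (t + 1) (by omega) (by omega)
          simpa using h'
        exact (key t h1 (by omega) v hv1).mp (hEv t h1 (by omega))
    have main : ∀ t, t ≤ T - 1 → v t = u t := by
      intro t
      induction t with
      | zero => intro _; rw [hv0, hu0]
      | succ t ih =>
        intro hle
        have h1 : v (t + 1) = A (t + 1) / A t * φ t (v t) := by
          have h' := Q (T - (t + 1)) (t + 1) (by omega) (by omega)
          simpa using h'
        have h2 := hurec (t + 1) (by omega) (by omega)
        simp only [Nat.add_sub_cancel] at h2
        rw [h1, ih (by omega), h2]
    intro t _ h2
    exact main t h2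
end

section
/- For constant c_t ≡ 1, h_t ≡ h ≥ 0, and σ_t ≡ σ > 0, the optimal value of the shifts-optimization problem satisfies E(u*) = (1/σ²)(D²/T + h Σ_{t=1}^{T} 1/t) ≤ (1/σ²)(D²/T + h(1 + ln T)). -/
open Finset

lemma aux_swap (f : ℕ → ℝ) : ∀ n : ℕ,
    ∑ t ∈ Finset.range n, ∑ k ∈ Finset.Icc 1 t, f k
      = ∑ k ∈ Finset.Icc 1 (n - 1), ((n - k : ℕ) : ℝ) * f k := by
  intro n
  induction n with
  | zero => simp
  | succ n ih =>
    rw [Finset.sum_range_succ, ih]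
    cases n with
    | zero => simp
    | succ m =>
      have hins : Finset.Icc 1 (m + 1) = insert (m + 1) (Finset.Icc 1 m) := by
        ext x; simp only [Finset.mem_Icc, Finset.mem_insert]; omega
      simp only [Nat.add_sub_cancel]
      rw [hins, Finset.sum_insert (by simp), Finset.sum_insert (by simp)]
      have h1 : ((m + 1 + 1 - (m + 1) : ℕ) : ℝ) = 1 := by norm_num
      rw [h1]
      have h3 : ∀ k ∈ Finset.Icc 1 m, ((m + 1 + 1 - k : ℕ) : ℝ) * f k
          = ((m + 1 - k : ℕ) : ℝ) * f k + f k := by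
        intro k hk
        have hk' : k ≤ m := (Finset.mem_Icc.mp hk).2
        have : (m + 1 + 1 - k : ℕ) = (m + 1 - k) + 1 := by omega
        rw [this]; push_cast; ring
      rw [Finset.sum_congr rfl h3, Finset.sum_add_distrib]
      ring

lemma aux_reflect (n : ℕ) :
    ∑ k ∈ Finset.Icc 1 n, (1 : ℝ) / ((n + 1 - k : ℕ) : ℝ)
      = ∑ k ∈ Finset.Icc 1 n, (1 : ℝ) / (k : ℝ) := by
  refine Finset.sum_nbij' (i := fun k => n + 1 - k) (j := fun k => n + 1 - k) ?_ ?_ ?_ ?_ ?_ <;>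
      intro a ha <;> simp only [Finset.mem_Icc] at ha ⊢ <;>
    first
      | omega
      | (congr 2; omega)

/-- For constant parameters `c ≡ 1`, `h ≥ 0`, `σ > 0`, the optimal value of the
shifts-optimization problem is `(1/σ²)(D²/T + h ∑_{t=1}^T 1/t) ≤ (1/σ²)(D²/T + h(1 + ln T))`. -/
theorem shifts_optimization_value_constant_nonexpansive
    (T : ℕ) (hT : 1 ≤ T) (h σ : ℝ) (hh : 0 ≤ h) (hσ : 0 < σ)
    (D : ℝ) (hD : 0 < D)
    (φ : ℝ → ℝ) (hφ : ∀ δ, φ δ = Real.sqrt (δ ^ 2 + h))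
    (A : ℕ → ℝ) (hA : ∀ t, A t = ((T - t : ℕ) : ℝ) * σ ^ 2)
    (u : ℕ → ℝ) (hu0 : u 0 = D) (huT : u T = 0)
    (hurec : ∀ t, 1 ≤ t → t ≤ T - 1 → u t = (A t / A (t - 1)) * φ (u (t - 1))) :
    ∑ t ∈ Finset.range T, (φ (u t) - u (t + 1)) ^ 2 / σ ^ 2
        = (1 / σ ^ 2) * (D ^ 2 / T + h * ∑ t ∈ Finset.Icc 1 T, (1 : ℝ) / t)
    ∧ ∑ t ∈ Finset.range T, (φ (u t) - u (t + 1)) ^ 2 / σ ^ 2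
        ≤ (1 / σ ^ 2) * (D ^ 2 / T + h * (1 + Real.log T)) := by
  have hσ2 : (σ : ℝ) ^ 2 ≠ 0 := by positivity
  have hTR : (0 : ℝ) < (T : ℝ) := by exact_mod_cast hT
  have hTR' : (T : ℝ) ≠ 0 := ne_of_gt hTR
  set G : ℕ → ℝ := fun t =>
    (D ^ 2 + h) / (T : ℝ) ^ 2 + h * ∑ k ∈ Finset.Icc 1 t, 1 / ((T - k : ℕ) : ℝ) ^ 2 with hG
  -- φ squared
  have hφ2 : ∀ x : ℝ, φ x ^ 2 = x ^ 2 + h := by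
    intro x; rw [hφ, Real.sq_sqrt (by positivity)]
  -- the recursion in uniform form
  have hstep : ∀ t, t < T →
      u (t + 1) = (((T - (t + 1) : ℕ) : ℝ) / ((T - t : ℕ) : ℝ)) * φ (u t) := by
    intro t ht
    rcases eq_or_lt_of_le (Nat.succ_le_of_lt ht) with heq | hlt
    · have h0 : (T - (t + 1) : ℕ) = 0 := by omega
      have hu : u (t + 1) = 0 := by rw [show t + 1 = T by omega]; exact huT
      rw [hu, h0]; simp
    · have h1 : u (t + 1) = (A (t + 1) / A (t + 1 - 1)) * φ (u (t + 1 - 1)) :=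
        hurec (t + 1) (by omega) (by omega)
      simp only [Nat.add_sub_cancel] at h1
      rw [h1, hA, hA]
      congr 1
      rw [mul_div_mul_right _ _ hσ2]
  -- the key invariant
  have key : ∀ t, t < T → φ (u t) ^ 2 = ((T - t : ℕ) : ℝ) ^ 2 * G t := by
    intro t
    induction t with
    | zero =>
      intro _
      rw [hφ2, hu0]
      simp only [hG, Nat.sub_zero]
      rw [show Finset.Icc 1 0 = (∅ : Finset ℕ) by rfl]
      simp
      field_simp
    | succ t ih =>
      intro ht1
      have ht : t < T := by omega
      have hb0 : ((T - t : ℕ) : ℝ) ≠ 0 := by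
        have : 0 < T - t := by omega
        positivity
      have ha0 : ((T - (t + 1) : ℕ) : ℝ) ≠ 0 := by
        have : 0 < T - (t + 1) := by omega
        positivity
      have hins : Finset.Icc 1 (t + 1) = insert (t + 1) (Finset.Icc 1 t) := by
        ext x; simp only [Finset.mem_Icc, Finset.mem_insert]; omega
      have hGsucc : G (t + 1) = G t + h * (1 / ((T - (t + 1) : ℕ) : ℝ) ^ 2) := by
        simp only [hG]
        rw [hins, Finset.sum_insert (by simp)]
        ring
      rw [hφ2, hstep t ht, hGsucc]
      rw [mul_pow, div_pow, hφ2 (u t), ← hφ2 (u t), ih ht]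
      field_simp
  -- each cost term equals G t
  have hterm : ∀ t ∈ Finset.range T, (φ (u t) - u (t + 1)) ^ 2 / σ ^ 2 = G t / σ ^ 2 := by
    intro t ht
    rw [Finset.mem_range] at ht
    have hb0 : ((T - t : ℕ) : ℝ) ≠ 0 := by
      have : 0 < T - t := by omega
      positivity
    have hba : ((T - t : ℕ) : ℝ) = ((T - (t + 1) : ℕ) : ℝ) + 1 := by
      have : (T - t : ℕ) = (T - (t + 1)) + 1 := by omega
      rw [this]; push_cast; ring
    congr 1
    rw [hstep t ht]
    have hsq : φ (u t) ^ 2 = ((T - t : ℕ) : ℝ) ^ 2 * G t := key t ht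
    have : φ (u t) - ((T - (t + 1) : ℕ) : ℝ) / ((T - t : ℕ) : ℝ) * φ (u t)
        = φ (u t) / ((T - t : ℕ) : ℝ) := by
      rw [hba]
      field_simp
      try ring
    rw [this, div_pow, hsq]
    field_simp
    try ring
  rw [Finset.sum_congr rfl hterm]
  -- compute the sum of G
  have hsumG : ∑ t ∈ Finset.range T, G t
      = D ^ 2 / T + h * ∑ t ∈ Finset.Icc 1 T, (1 : ℝ) / t := by
    simp only [hG]
    rw [Finset.sum_add_distrib, Finset.sum_const, Finset.card_range, ← Finset.mul_sum,
      aux_swap]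
    have hco : ∀ k ∈ Finset.Icc 1 (T - 1),
        ((T - k : ℕ) : ℝ) * (1 / ((T - k : ℕ) : ℝ) ^ 2) = 1 / ((T - 1 + 1 - k : ℕ) : ℝ) := by
      intro k hk
      rw [Finset.mem_Icc] at hk
      have h0 : ((T - k : ℕ) : ℝ) ≠ 0 := by
        have : 0 < T - k := by omega
        positivity
      have : (T - 1 + 1 - k : ℕ) = T - k := by omega
      rw [this]
      field_simp
    rw [Finset.sum_congr rfl hco, aux_reflect (T - 1)]
    have hiT : Finset.Icc 1 T = insert T (Finset.Icc 1 (T - 1)) := by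
      ext x; simp only [Finset.mem_Icc, Finset.mem_insert]; omega
    rw [hiT, Finset.sum_insert (by simp only [Finset.mem_Icc]; omega)]
    have : (T : ℝ) • ((D ^ 2 + h) / (T : ℝ) ^ 2) = D ^ 2 / T + h / T := by
      rw [smul_eq_mul]; field_simp
    rw [nsmul_eq_mul, show ((T : ℕ) : ℝ) * ((D ^ 2 + h) / (T : ℝ) ^ 2)
        = D ^ 2 / T + h / T by field_simp]
    ring
  have heq : ∑ t ∈ Finset.range T, G t / σ ^ 2
      = (1 / σ ^ 2) * (D ^ 2 / T + h * ∑ t ∈ Finset.Icc 1 T, (1 : ℝ) / t) := by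
    rw [← Finset.sum_div, hsumG]; ring
  refine ⟨heq, heq.trans_le ?_⟩
  have hharm : ∑ t ∈ Finset.Icc 1 T, (1 : ℝ) / t ≤ 1 + Real.log T := by
    have h1 : ((harmonic T : ℚ) : ℝ) = ∑ t ∈ Finset.Icc 1 T, (1 : ℝ) / t := by
      rw [harmonic_eq_sum_Icc]
      push_cast
      simp [one_div]
    rw [← h1]
    exact harmonic_le_one_add_log T
  have h2 : (0 : ℝ) ≤ 1 / σ ^ 2 := by positivity
  apply mul_le_mul_of_nonneg_left _ h2
  have := mul_le_mul_of_nonneg_left hharm hh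
  linarith
end

section
/- For any c ∈ (0,1) and T ∈ ℕ with T ≥ 1, it holds that 1 + ln((1 - c^{T+1})/(1 - c²)) ≤ Σ_{t=0}^{T-1} c^t / (Σ_{j=0}^{t} c^j) ≤ 1 + ln((1 - c^T)/(1 - c)). -/
/-!
Write `S t = ∑_{j ≤ t} c^j`, so that `c^t / S t = (S t - S (t-1)) / S t` for `t ≥ 1`. Since `1/x`
is decreasing, `(b - a)/b ≤ log b - log a ≤ (b - a)/a`, so the sum after its first term (which is
`1`) is squeezed between telescoping sums of `log S`: from above by `log S (T-1)` directly, and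
from below, after using `c^t ≥ c^(t+1) = S (t+1) - S t`, by `log S T - log S 1`. The closed form
`S t = (1 - c^(t+1))/(1 - c)` turns these into the stated logarithms.
-/

open Finset Real

lemma sub_div_le_log_sub_log {a b : ℝ} (ha : 0 < a) (hb : 0 < b) :
    (b - a) / b ≤ log b - log a := by
  have h := one_sub_inv_le_log_of_pos (div_pos hb ha)
  rwa [log_div hb.ne' ha.ne', inv_div, one_sub_div hb.ne'] at h

lemma log_sub_log_le_sub_div {a b : ℝ} (ha : 0 < a) (hb : 0 < b) :
    log b - log a ≤ (b - a) / a := by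
  have h := log_le_sub_one_of_pos (div_pos hb ha)
  rwa [log_div hb.ne' ha.ne', div_sub_one ha.ne'] at h

section Telescoping

variable {S : ℕ → ℝ} (hS : ∀ t, 0 < S t)
include hS

lemma sum_sub_div_succ_le_log_sub_log (n : ℕ) :
    ∑ t ∈ range n, (S (t + 1) - S t) / S (t + 1) ≤ log (S n) - log (S 0) := by
  rw [← sum_range_sub (fun t => log (S t))]
  exact sum_le_sum fun t _ => sub_div_le_log_sub_log (hS t) (hS (t + 1))

lemma log_sub_log_le_sum_sub_div (n : ℕ) :
    log (S n) - log (S 0) ≤ ∑ t ∈ range n, (S (t + 1) - S t) / S t := by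
  rw [← sum_range_sub (fun t => log (S t))]
  exact sum_le_sum fun t _ => log_sub_log_le_sub_div (hS t) (hS (t + 1))

end Telescoping

lemma geom_sum_succ_sub {R : Type*} [Ring R] (c : R) (n : ℕ) :
    ∑ j ∈ range (n + 1), c ^ j - ∑ j ∈ range n, c ^ j = c ^ n :=
  sub_eq_iff_eq_add'.2 (sum_range_succ _ _)

lemma geom_sum_eq_one_sub_div {K : Type*} [DivisionRing K] {c : K} (hc : c ≠ 1) (n : ℕ) :
    ∑ j ∈ range n, c ^ j = (1 - c ^ n) / (1 - c) := by
  rw [geom_sum_eq hc, ← neg_div_neg_eq, neg_sub, neg_sub]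

lemma sum_range_succ_pow_div_geom_sum {K : Type*} [DivisionRing K] (c : K) (n : ℕ) :
    ∑ t ∈ range (n + 1), c ^ t / ∑ j ∈ range (t + 1), c ^ j
      = 1 + ∑ t ∈ range n, c ^ (t + 1) / ∑ j ∈ range (t + 1 + 1), c ^ j := by
  rw [sum_range_succ', add_comm]
  simp

section GeomSumLog

variable {c : ℝ}

lemma sum_pow_div_geom_sum_le (hc : 0 ≤ c) (n : ℕ) :
    ∑ t ∈ range (n + 1), c ^ t / ∑ j ∈ range (t + 1), c ^ j
      ≤ 1 + log (∑ j ∈ range (n + 1), c ^ j) := by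
  have hS t : 0 < ∑ j ∈ range (t + 1), c ^ j := geom_sum_pos hc t.succ_ne_zero
  have h := sum_sub_div_succ_le_log_sub_log hS n
  simp only [geom_sum_succ_sub, zero_add, range_one, sum_singleton, pow_zero, log_one,
    sub_zero] at h
  rw [sum_range_succ_pow_div_geom_sum]
  linarith

lemma le_sum_pow_div_geom_sum (hc₀ : 0 ≤ c) (hc₁ : c ≤ 1) (n : ℕ) :
    1 + log (∑ j ∈ range (n + 1 + 1), c ^ j) - log (1 + c)
      ≤ ∑ t ∈ range (n + 1), c ^ t / ∑ j ∈ range (t + 1), c ^ j := by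
  have hS t : 0 < ∑ j ∈ range (t + 1 + 1), c ^ j := geom_sum_pos hc₀ (t + 1).succ_ne_zero
  have h := log_sub_log_le_sum_sub_div hS n
  simp only [geom_sum_succ_sub] at h
  rw [show ∑ j ∈ range (0 + 1 + 1), c ^ j = 1 + c by simp [sum_range_succ]] at h
  have hterm : ∀ t ∈ range n, c ^ (t + 1 + 1) / ∑ j ∈ range (t + 1 + 1), c ^ j
      ≤ c ^ (t + 1) / ∑ j ∈ range (t + 1 + 1), c ^ j := fun t _ =>
    div_le_div_of_nonneg_right (pow_le_pow_of_le_one hc₀ hc₁ (t + 1).le_succ) (hS t).le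
  rw [sum_range_succ_pow_div_geom_sum]
  linarith [sum_le_sum hterm]

end GeomSumLog

/-- For `c ∈ (0,1)` and `T ≥ 1`:
`1 + ln((1 - c^{T+1})/(1 - c²)) ≤ ∑_{t=0}^{T-1} c^t / (∑_{j=0}^t c^j) ≤ 1 + ln((1 - c^T)/(1 - c))`. -/
theorem geometric_sum_integral_estimate
    (c : ℝ) (hc0 : 0 < c) (hc1 : c < 1) (T : ℕ) (hT : 1 ≤ T) :
    1 + Real.log ((1 - c ^ (T + 1)) / (1 - c ^ 2))
        ≤ ∑ t ∈ Finset.range T, c ^ t / (∑ j ∈ Finset.range (t + 1), c ^ j)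
    ∧ ∑ t ∈ Finset.range T, c ^ t / (∑ j ∈ Finset.range (t + 1), c ^ j)
        ≤ 1 + Real.log ((1 - c ^ T) / (1 - c)) := by
  obtain ⟨n, rfl⟩ : ∃ n, T = n + 1 := ⟨T - 1, by omega⟩
  have hc : c ≠ 1 := hc1.ne
  have hlower :
      (1 - c ^ (n + 1 + 1)) / (1 - c ^ 2) = (∑ j ∈ range (n + 1 + 1), c ^ j) / (1 + c) := by
    rw [geom_sum_eq_one_sub_div hc, div_div, show (1 - c ^ 2) = (1 - c) * (1 + c) by ring]
  have hpos : 0 < ∑ j ∈ range (n + 1 + 1), c ^ j := geom_sum_pos hc0.le (n + 1).succ_ne_zero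
  rw [hlower, log_div hpos.ne' (by linarith), ← geom_sum_eq_one_sub_div hc, ← add_sub_assoc]
  exact ⟨le_sum_pow_div_geom_sum hc0.le hc1.le n, sum_pow_div_geom_sum_le hc0.le n⟩
end

section
/- Let η, D, M > 0 and p ∈ [0,1) with 1/η ≥ ((1-p)/(1+p))^{(1-p)/(1+p)} (M/2)^{2/(1+p)}. Set η̃ = η^{(1+p)/(1-p)} and M̃ = √((1-p)/(1+p)) (M/2)^{1/(1-p)}. If 1/η̃ ≥ M̃² max{16 ln(√(2e) D M̃^{(1-p)/(1+p)}), 27}, then 2 ln(√(2e) D M̃^{(1-p)/(1+p)}) ≤ 1/(4η̃M̃²) - ((1-p)/(1+p)) ln(1/(η̃M̃²)). -/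
lemma log27_le : Real.log 27 ≤ 27 / 8 := by
  rw [Real.log_le_iff_le_exp (by norm_num)]
  have h1 : (2.7182818283:ℝ) < Real.exp 1 := Real.exp_one_gt_d9
  have h2 : Real.exp (27/8) = (Real.exp 1)^3 * Real.exp (3/8) := by
    rw [← Real.exp_nat_mul, ← Real.exp_add]; norm_num
  have h3 : (1:ℝ) + 3/8 ≤ Real.exp (3/8) := by
    have := Real.add_one_le_exp (3/8 : ℝ); linarith
  have h4 : (0:ℝ) < Real.exp 1 := Real.exp_pos 1
  have h5 : (20:ℝ) < (Real.exp 1) ^ 3 := by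
    calc (20:ℝ) < 2.7182818283 ^ 3 := by norm_num
      _ < (Real.exp 1) ^ 3 := by gcongr <;> norm_num
  have h6 : (0:ℝ) < Real.exp (3/8) := Real.exp_pos _
  rw [h2]
  nlinarith

lemma log_le_div_eight {x : ℝ} (hx : 27 ≤ x) : Real.log x ≤ x / 8 := by
  have hx0 : (0:ℝ) < x := by linarith
  have h1 : Real.log x = Real.log 27 + Real.log (x / 27) := by
    rw [← Real.log_mul (by norm_num) (by positivity)]
    ring_nf
  have h2 : Real.log (x / 27) ≤ x / 27 - 1 :=
    Real.log_le_sub_one_of_pos (by positivity)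
  have := log27_le
  linarith

/-- Key quantitative inequality in the mixing-time proof for weakly smooth potentials.
With `η̃ = η^{(1+p)/(1-p)}` and `M̃ = √((1-p)/(1+p)) (M/2)^{1/(1-p)}`, the stepsize
condition `1/η̃ ≥ M̃² max{16 ln(√(2e) D M̃^{(1-p)/(1+p)}), 27}` implies
`2 ln(√(2e) D M̃^{(1-p)/(1+p)}) ≤ 1/(4η̃M̃²) - ((1-p)/(1+p)) ln(1/(η̃M̃²))`. -/
theorem stepsize_condition_implies_key_inequality
    (η D M p : ℝ) (hη : 0 < η) (hD : 0 < D) (hM : 0 < M) (hp0 : 0 ≤ p) (hp1 : p < 1)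
    (h1 : 1 / η ≥ ((1 - p) / (1 + p)) ^ ((1 - p) / (1 + p)) * (M / 2) ^ (2 / (1 + p)))
    (ηt Mt : ℝ)
    (hηt : ηt = η ^ ((1 + p) / (1 - p)))
    (hMt : Mt = Real.sqrt ((1 - p) / (1 + p)) * (M / 2) ^ (1 / (1 - p)))
    (h2 : 1 / ηt ≥ Mt ^ 2 *
      max (16 * Real.log (Real.sqrt (2 * Real.exp 1) * D * Mt ^ ((1 - p) / (1 + p)))) 27) :
    2 * Real.log (Real.sqrt (2 * Real.exp 1) * D * Mt ^ ((1 - p) / (1 + p)))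
      ≤ 1 / (4 * ηt * Mt ^ 2) - ((1 - p) / (1 + p)) * Real.log (1 / (ηt * Mt ^ 2)) := by
  have hp1' : 0 < 1 - p := by linarith
  have hp2 : 0 < 1 + p := by linarith
  have hηt0 : 0 < ηt := by rw [hηt]; positivity
  have hMt0 : 0 < Mt := by
    rw [hMt]
    have : 0 < (1 - p) / (1 + p) := by positivity
    have h5 : 0 < Real.sqrt ((1 - p) / (1 + p)) := Real.sqrt_pos.mpr this
    have h6 : 0 < (M / 2) ^ (1 / (1 - p)) := Real.rpow_pos_of_pos (by linarith) _
    positivity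
  set L := Real.log (Real.sqrt (2 * Real.exp 1) * D * Mt ^ ((1 - p) / (1 + p))) with hL
  set x := 1 / (ηt * Mt ^ 2) with hx
  have hx0 : 0 < x := by positivity
  have hMt2 : (0:ℝ) < Mt ^ 2 := by positivity
  have hxge : max (16 * L) 27 ≤ x := by
    rw [hx, show 1 / (ηt * Mt ^ 2) = 1 / ηt / Mt ^ 2 by field_simp,
      le_div_iff₀ hMt2]
    calc max (16 * L) 27 * Mt ^ 2 = Mt ^ 2 * max (16 * L) 27 := by ring
      _ ≤ 1 / ηt := h2
  have hx27 : (27:ℝ) ≤ x := le_trans (le_max_right _ _) hxge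
  have hxL : 16 * L ≤ x := le_trans (le_max_left _ _) hxge
  have hlogx : 0 ≤ Real.log x := Real.log_nonneg (by linarith)
  have hc1 : (1 - p) / (1 + p) ≤ 1 := by
    rw [div_le_one hp2]; linarith
  have hc0 : 0 ≤ (1 - p) / (1 + p) := by positivity
  have hclog : (1 - p) / (1 + p) * Real.log x ≤ Real.log x := by
    nlinarith
  have hle8 : Real.log x ≤ x / 8 := log_le_div_eight hx27
  have hrw : 1 / (4 * ηt * Mt ^ 2) = x / 4 := by
    rw [hx]; field_simp
  rw [hrw]
  have : 2 * L ≤ x / 8 := by linarith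
  linarith
end
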